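/- Let k be a nonzero integer and let ψ_k : ℂΓ → ℂ be the ℂ-linear functional determined on group elements by ψ_k(S^m) = 1 if m = k or m = −k and ψ_k(S^m) = 0 otherwise, and ψ_k(S^m·e) = 0 for all m ∈ ℤ. Then there exists a ℂ-bilinear map φ : ℂΓ × ℂΓ → ℂ satisfying φ(x, y) = −φ(y, x) for all x, y ∈ ℂΓ and φ(x·y, z) − φ(x, y·z) + φ(z·x, y) = ψ_k(x·y·z) for all x, y, z ∈ ℂΓ. (That is, the cyclic 2-cocycle S ψ_k is a coboundary.) -/

import Mathlib

namespace InfiniteDihedral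

/-- The generator `S` of the infinite dihedral group `Γ = DihedralGroup 0`. -/
def S : DihedralGroup 0 := DihedralGroup.r 1

/-- The order-two generator `e` of the infinite dihedral group, with `e·S·e = S⁻¹`. -/
def e : DihedralGroup 0 := DihedralGroup.sr 0

/-- The group algebra `ℂΓ` of the infinite dihedral group. -/
abbrev A : Type := MonoidAlgebra ℂ (DihedralGroup 0)

/-- The canonical inclusion of group elements into the group algebra `ℂΓ`. -/
noncomputable def of : DihedralGroup 0 →* A := MonoidAlgebra.of ℂ (DihedralGroup 0)

def toInt : ZMod 0 → ℤ := fun i => i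

@[simp] lemma toInt_add (i j : ZMod 0) : toInt (i + j) = toInt i + toInt j := rfl
@[simp] lemma toInt_sub (i j : ZMod 0) : toInt (i - j) = toInt i - toInt j := rfl
@[simp] lemma toInt_neg (i : ZMod 0) : toInt (-i) = -toInt i := rfl
@[simp] lemma toInt_coe (m : ℤ) : toInt (m : ZMod 0) = m := rfl
lemma coe_toInt (i : ZMod 0) : ((toInt i : ℤ) : ZMod 0) = i := rfl

lemma S_zpow (m : ℤ) : S ^ m = DihedralGroup.r (m : ZMod 0) := by
  induction m using Int.induction_on with
  | zero => rw [zpow_zero]; rfl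
  | succ n ih => rw [zpow_add_one, ih]; exact DihedralGroup.r_mul_r _ _
  | pred n ih =>
      rw [zpow_sub_one, ih, show (S : DihedralGroup 0)⁻¹ =
        DihedralGroup.r (-1) from rfl]
      exact (DihedralGroup.r_mul_r _ _).trans
        (congrArg DihedralGroup.r (by show (-(n : ℤ)) + -1 = -(n : ℤ) - 1; ring))

/-- signed indicator of `{k, -k}` -/
noncomputable def EsZ (k m : ℤ) : ℂ := if m = k then 1 else if m = -k then -1 else 0
/-- indicator of `{k, -k}` -/
noncomputable def chiZ (k m : ℤ) : ℂ := if m = k ∨ m = -k then 1 else 0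

/-- weight -/
def wi : DihedralGroup 0 → ℤ
  | .r i => toInt i
  | .sr i => -toInt i

noncomputable def Es (k : ℤ) : DihedralGroup 0 → ℂ
  | .r i => EsZ k (toInt i)
  | .sr _ => 0

noncomputable def chi (k : ℤ) : DihedralGroup 0 → ℂ
  | .r i => chiZ k (toInt i)
  | .sr _ => 0

@[simp] lemma Es_r (k : ℤ) (i : ZMod 0) : Es k (.r i) = EsZ k (toInt i) := rfl
@[simp] lemma Es_sr (k : ℤ) (i : ZMod 0) : Es k (.sr i) = 0 := rfl
@[simp] lemma chi_r (k : ℤ) (i : ZMod 0) : chi k (.r i) = chiZ k (toInt i) := rfl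
@[simp] lemma chi_sr (k : ℤ) (i : ZMod 0) : chi k (.sr i) = 0 := rfl
@[simp] lemma wi_r (i : ZMod 0) : wi (.r i) = toInt i := rfl
@[simp] lemma wi_sr (i : ZMod 0) : wi (.sr i) = -toInt i := rfl

/-- the cobounding 1-cochain on group elements -/
noncomputable def B (k : ℤ) (g h : DihedralGroup 0) : ℂ :=
  (2 / (k : ℂ)) * Es k (g * h) * (wi g : ℂ) - chi k (g * h)

lemma kC {k : ℤ} (hk : k ≠ 0) : (k : ℂ) ≠ 0 := Int.cast_ne_zero.mpr hk

lemma coreAnti {k : ℤ} (hk : k ≠ 0) (T w1 w2 : ℤ) (hw : w1 + w2 = T) :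
    2 / (k : ℂ) * EsZ k T * w1 - chiZ k T = -(2 / (k : ℂ) * EsZ k T * w2 - chiZ k T) := by
  have hk' := kC hk
  by_cases h1 : T = k
  · rw [h1] at hw ⊢
    have hc : (w1 : ℂ) + w2 = k := by exact_mod_cast hw
    simp only [EsZ, chiZ, if_pos rfl, true_or, if_true]
    field_simp
    linear_combination 2 * hc
  · by_cases h2 : T = -k
    · rw [h2] at hw ⊢
      have hc : (w1 : ℂ) + w2 = -k := by exact_mod_cast hw
      simp only [EsZ, chiZ, if_neg (show ¬ (-k = k) by omega), if_pos rfl, or_true, if_true]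
      field_simp
      linear_combination -2 * hc
    · simp only [EsZ, chiZ, if_neg h1, if_neg h2, if_neg (not_or.mpr ⟨h1, h2⟩)]
      ring

lemma coreAntiB {k : ℤ} (hk : k ≠ 0) (T w1 w2 : ℤ) (hw : w1 - w2 = T) :
    2 / (k : ℂ) * EsZ k T * w1 - chiZ k T = -(2 / (k : ℂ) * EsZ k (-T) * w2 - chiZ k (-T)) := by
  have hk' := kC hk
  by_cases h1 : T = k
  · rw [h1] at hw ⊢
    have hc : (w1 : ℂ) - w2 = k := by exact_mod_cast hw
    simp only [EsZ, chiZ, if_pos rfl, true_or, if_true,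
      if_neg (show ¬ (-k = k) by omega), or_true]
    field_simp
    linear_combination 2 * hc
  · by_cases h2 : T = -k
    · rw [h2] at hw ⊢
      have hc : (w1 : ℂ) - w2 = -k := by exact_mod_cast hw
      simp only [EsZ, chiZ, neg_neg, if_neg (show ¬ (-k = k) by omega), if_pos rfl, or_true,
        true_or, if_true]
      field_simp
      linear_combination -2 * hc
    · have h1' : ¬ (-T = k) := by omega
      have h2' : ¬ (-T = -k) := by omega
      simp only [EsZ, chiZ, if_neg h1, if_neg h2, if_neg h1', if_neg h2',
        if_neg (not_or.mpr ⟨h1, h2⟩), if_neg (not_or.mpr ⟨h1', h2'⟩)]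
      ring

lemma coreA {k : ℤ} (hk : k ≠ 0) (T w1 w2 w3 : ℤ) (hw : w1 - w2 + w3 = T) :
    2 / (k : ℂ) * EsZ k T * w1 - chiZ k T - (2 / (k : ℂ) * EsZ k T * w2 - chiZ k T)
      + (2 / (k : ℂ) * EsZ k T * w3 - chiZ k T) = chiZ k T := by
  have hk' := kC hk
  by_cases h1 : T = k
  · rw [h1] at hw ⊢
    have hc : (w1 : ℂ) - w2 + w3 = k := by exact_mod_cast hw
    simp only [EsZ, chiZ, if_pos rfl, true_or, if_true]
    field_simp
    linear_combination 2 * hc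
  · by_cases h2 : T = -k
    · rw [h2] at hw ⊢
      have hc : (w1 : ℂ) - w2 + w3 = -k := by exact_mod_cast hw
      simp only [EsZ, chiZ, if_neg (show ¬ (-k = k) by omega), if_pos rfl, or_true, if_true]
      field_simp
      linear_combination -2 * hc
    · simp only [EsZ, chiZ, if_neg h1, if_neg h2, if_neg (not_or.mpr ⟨h1, h2⟩)]
      ring

lemma coreB {k : ℤ} (hk : k ≠ 0) (T w1 w2 w3 : ℤ) (hw : w1 - w2 - w3 = T) :
    2 / (k : ℂ) * EsZ k T * w1 - chiZ k T - (2 / (k : ℂ) * EsZ k T * w2 - chiZ k T)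
      + (2 / (k : ℂ) * EsZ k (-T) * w3 - chiZ k (-T)) = chiZ k T := by
  have hk' := kC hk
  by_cases h1 : T = k
  · rw [h1] at hw ⊢
    have hc : (w1 : ℂ) - w2 - w3 = k := by exact_mod_cast hw
    simp only [EsZ, chiZ, if_pos rfl, true_or, if_true,
      if_neg (show ¬ (-k = k) by omega), or_true]
    field_simp
    linear_combination 2 * hc
  · by_cases h2 : T = -k
    · rw [h2] at hw ⊢
      have hc : (w1 : ℂ) - w2 - w3 = -k := by exact_mod_cast hw
      simp only [EsZ, chiZ, neg_neg, if_neg (show ¬ (-k = k) by omega), if_pos rfl, or_true,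
        true_or, if_true]
      field_simp
      linear_combination -2 * hc
    · have h1' : ¬ (-T = k) := by omega
      have h2' : ¬ (-T = -k) := by omega
      simp only [EsZ, chiZ, if_neg h1, if_neg h2, if_neg h1', if_neg h2',
        if_neg (not_or.mpr ⟨h1, h2⟩), if_neg (not_or.mpr ⟨h1', h2'⟩)]
      ring

lemma B_antisymm {k : ℤ} (hk : k ≠ 0) (g h : DihedralGroup 0) : B k g h = - B k h g := by
  cases g with
  | r a => cases h with
    | r b =>
        simp only [B, DihedralGroup.r_mul_r, Es_r, chi_r, wi_r, toInt_add]
        rw [show toInt b + toInt a = toInt a + toInt b by ring]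
        exact coreAnti hk _ _ _ rfl
    | sr b =>
        simp only [B, DihedralGroup.r_mul_sr, DihedralGroup.sr_mul_r, Es_sr, chi_sr]
        ring
  | sr a => cases h with
    | r b =>
        simp only [B, DihedralGroup.sr_mul_r, DihedralGroup.r_mul_sr, Es_sr, chi_sr]
        ring
    | sr b =>
        simp only [B, DihedralGroup.sr_mul_sr, Es_r, chi_r, wi_sr, toInt_sub]
        rw [show toInt a - toInt b = -(toInt b - toInt a) by ring]
        exact coreAntiB hk _ _ _ (by ring)

lemma B_cocycle {k : ℤ} (hk : k ≠ 0) (g h l : DihedralGroup 0) :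
    B k (g * h) l - B k g (h * l) + B k (l * g) h = chi k (g * h * l) := by
  cases g with
  | r a => cases h with
    | r b => cases l with
      | r c =>
          simp only [B, DihedralGroup.r_mul_r, Es_r, chi_r, wi_r, toInt_add]
          rw [show toInt a + (toInt b + toInt c) = toInt a + toInt b + toInt c by ring,
            show toInt c + toInt a + toInt b = toInt a + toInt b + toInt c by ring]
          exact coreA hk _ _ _ _ (by ring)
      | sr c =>
          simp only [B, DihedralGroup.r_mul_r, DihedralGroup.r_mul_sr, DihedralGroup.sr_mul_r,
            Es_sr, chi_sr]
          ring
    | sr b => cases l with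
      | r c =>
          simp only [B, DihedralGroup.r_mul_r, DihedralGroup.r_mul_sr, DihedralGroup.sr_mul_r,
            Es_sr, chi_sr]
          ring
      | sr c =>
          simp only [B, DihedralGroup.r_mul_sr, DihedralGroup.sr_mul_sr, DihedralGroup.sr_mul_r,
            DihedralGroup.r_mul_r, Es_r, chi_r, wi_r, wi_sr, toInt_add, toInt_sub, toInt_neg]
          rw [show toInt a + (toInt c - toInt b) = toInt c - (toInt b - toInt a) by ring,
            show toInt b - (toInt c + toInt a) = -(toInt c - (toInt b - toInt a)) by ring]
          exact coreB hk _ _ _ _ (by ring)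
  | sr a => cases h with
    | r b => cases l with
      | r c =>
          simp only [B, DihedralGroup.sr_mul_r, DihedralGroup.r_mul_r, DihedralGroup.r_mul_sr,
            Es_sr, chi_sr]
          ring
      | sr c =>
          simp only [B, DihedralGroup.sr_mul_r, DihedralGroup.sr_mul_sr, DihedralGroup.r_mul_sr,
            DihedralGroup.r_mul_r, Es_r, chi_r, wi_r, wi_sr, toInt_add, toInt_sub, toInt_neg]
          rw [show toInt c - toInt b - toInt a = toInt c - (toInt a + toInt b) by ring,
            show toInt a - toInt c + toInt b = -(toInt c - (toInt a + toInt b)) by ring]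
          exact coreB hk _ _ _ _ (by ring)
    | sr b => cases l with
      | r c =>
          simp only [B, DihedralGroup.sr_mul_sr, DihedralGroup.sr_mul_r, DihedralGroup.r_mul_sr,
            DihedralGroup.r_mul_r, Es_r, chi_r, wi_r, wi_sr, toInt_add, toInt_sub, toInt_neg]
          rw [show toInt b - (toInt a - toInt c) = toInt b - toInt a + toInt c by ring,
            show toInt b + toInt c - toInt a = toInt b - toInt a + toInt c by ring]
          exact coreA hk _ _ _ _ (by ring)
      | sr c =>
          simp only [B, DihedralGroup.sr_mul_sr, DihedralGroup.sr_mul_r, DihedralGroup.r_mul_sr,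
            DihedralGroup.r_mul_r, Es_sr, chi_sr]
          ring

noncomputable def F (k : ℤ) :
    (DihedralGroup 0 →₀ ℂ) →ₗ[ℂ] (DihedralGroup 0 →₀ ℂ) →ₗ[ℂ] ℂ :=
  Finsupp.lift ((DihedralGroup 0 →₀ ℂ) →ₗ[ℂ] ℂ) ℂ (DihedralGroup 0)
    (fun g => Finsupp.lift ℂ ℂ (DihedralGroup 0) (fun h => B k g h))

lemma F_single (k : ℤ) (g h : DihedralGroup 0) (c d : ℂ) :
    F k (Finsupp.single g c) (Finsupp.single h d) = c * (d * B k g h) := by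
  simp [F, Finsupp.lift_apply, Finsupp.sum_single_index, smul_eq_mul]

/-- the cobounding bilinear functional -/
noncomputable def phi (k : ℤ) : A →ₗ[ℂ] A →ₗ[ℂ] ℂ :=
  (F k).compl₁₂ (MonoidAlgebra.coeffLinearEquiv ℂ).toLinearMap
    (MonoidAlgebra.coeffLinearEquiv ℂ).toLinearMap

lemma phi_single (k : ℤ) (g h : DihedralGroup 0) (c d : ℂ) :
    phi k (MonoidAlgebra.single g c) (MonoidAlgebra.single h d) = c * (d * B k g h) := F_single k g h c d

/-- Let `k ≠ 0` and let `ψₖ : ℂΓ → ℂ` be the linear functional with `ψₖ(Sᵐ) = 1` if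
`m = ±k` and `0` otherwise, and `ψₖ(Sᵐ·e) = 0`.  Then the cyclic 2-cocycle `S ψₖ` is a
coboundary: there is a bilinear `φ : ℂΓ × ℂΓ → ℂ` with `φ(x,y) = −φ(y,x)` and
`φ(xy,z) − φ(x,yz) + φ(zx,y) = ψₖ(xyz)` for all `x, y, z ∈ ℂΓ`. -/
theorem S_psi_k_is_coboundary (k : ℤ) (hk : k ≠ 0) (ψ : A →ₗ[ℂ] ℂ)
    (hψr : ∀ m : ℤ, ψ (of (S ^ m)) = if m = k ∨ m = -k then 1 else 0)
    (hψsr : ∀ m : ℤ, ψ (of (S ^ m * e)) = 0) :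
    ∃ φ : A →ₗ[ℂ] A →ₗ[ℂ] ℂ,
      (∀ x y : A, φ x y = - φ y x) ∧
      (∀ x y z : A, φ (x * y) z - φ x (y * z) + φ (z * x) y = ψ (x * y * z)) := by

  have psi_single : ∀ (γ : DihedralGroup 0) (c : ℂ),
      ψ (MonoidAlgebra.single γ c) = c * chi k γ := by
    intro γ c
    have hsc : (MonoidAlgebra.single γ c : A) = c • of γ := by
      simp [of, MonoidAlgebra.of_apply, MonoidAlgebra.smul_single']
    rw [hsc, map_smul, smul_eq_mul]
    congr 1
    cases γ with
    | r i =>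
        have := hψr (toInt i)
        rw [S_zpow, coe_toInt] at this
        rw [this]; rfl
    | sr i =>
        have := hψsr (-(toInt i))
        rw [S_zpow] at this
        have he : (DihedralGroup.r ((-(toInt i) : ℤ) : ZMod 0) * e : DihedralGroup 0)
            = DihedralGroup.sr i := by
          rw [show (e : DihedralGroup 0) = DihedralGroup.sr 0 from rfl,
            ]
          exact (DihedralGroup.r_mul_sr _ _).trans
            (congrArg DihedralGroup.sr (by show (0 : ℤ) - -(toInt i) = toInt i; omega))
        rw [he] at this
        rw [this]; rfl
  refine ⟨phi k, ?_, ?_⟩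
  · intro x y
    induction x using MonoidAlgebra.induction_linear with
    | zero => simp
    | add f g hf hg => rw [map_add, LinearMap.add_apply, hf, hg, map_add]; ring
    | single a b =>
      induction y using MonoidAlgebra.induction_linear with
      | zero => simp
      | add f g hf hg => rw [map_add, map_add, LinearMap.add_apply, hf, hg]; ring
      | single a' b' =>
          rw [phi_single, phi_single, B_antisymm hk]
          ring
  · intro x y z
    induction x using MonoidAlgebra.induction_linear with
    | zero => simp
    | add f g hf hg =>
        simp only [add_mul, mul_add, map_add, LinearMap.add_apply] at hf hg ⊢
        linear_combination hf + hg
    | single a b =>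
      induction y using MonoidAlgebra.induction_linear with
      | zero => simp
      | add f g hf hg =>
          simp only [add_mul, mul_add, map_add, LinearMap.add_apply] at hf hg ⊢
          linear_combination hf + hg
      | single a' b' =>
        induction z using MonoidAlgebra.induction_linear with
        | zero => simp
        | add f g hf hg =>
            simp only [add_mul, mul_add, map_add, LinearMap.add_apply] at hf hg ⊢
            linear_combination hf + hg
        | single a'' b'' =>
            rw [MonoidAlgebra.single_mul_single, MonoidAlgebra.single_mul_single,
              MonoidAlgebra.single_mul_single, MonoidAlgebra.single_mul_single,
              phi_single, phi_single, phi_single, psi_single]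
            have := B_cocycle hk a a' a''
            linear_combination (b * b' * b'') * this

end InfiniteDihedral
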